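/- arXiv:1706.06453 — 2 statements merged into one kernel-verified Lean document; each statement's English description precedes it below -/
import Mathlib

section
/- Let κ be a complex number, y ≥ 1, and let f₁ < f₂ be real numbers. Then the sum of e(Re(κ)·m₂ + Im(κ)·m₁) over pairs of integers (m₁, m₂) with m₁² + m₂² ≤ y and f₁ < arg(m₁ + i·m₂) ≤ f₂ is bounded in absolute value by a constant times y^{1/2} · min{‖Re(κ)‖⁻¹, √y}, where ‖x‖ is the distance from x to the nearest integer. -/
/-!
Group the lattice points by their first coordinate `m₁`. On the vertical line `Re z = m₁`,
`arg z` is monotone or antitone in `Im z` on each of the half-lines `Im z ≥ 0` and `Im z < 0`,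
and the disk condition cuts each half-line in an interval, so for fixed `m₁` the admissible `m₂`
of each sign form an interval of integers. Over an interval, `∑ e(θ m₂)` is a geometric sum
bounded by `2 / |e(θ) - 1| ≤ 1 / (2‖θ‖)`; it is also trivially bounded by the length `≤ 5√y`.
Summing over the `≤ 5√y` values of `m₁` gives the claim with `C = 25`.
-/

open Complex Finset

/-- Distance from a real number to the nearest integer. -/
noncomputable def nint (x : ℝ) : ℝ := ⨅ n : ℤ, |x - (n : ℝ)|

/-- `e(x) = exp(2πix)`. -/
noncomputable def eee (x : ℝ) : ℂ := Complex.exp (2 * (Real.pi : ℂ) * Complex.I * (x : ℂ))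

/-- `min {t⁻¹, Y}` with the convention `0⁻¹ = +∞`, so the value is `Y` when `t = 0`. -/
noncomputable def mmin (t Y : ℝ) : ℝ := if t = 0 then Y else min t⁻¹ Y

lemma nint_eq_abs_sub_round (x : ℝ) : nint x = |x - round x| :=
  le_antisymm (ciInf_le ⟨0, by rintro _ ⟨n, rfl⟩; positivity⟩ (round x)) (le_ciInf (round_le x))

lemma nint_nonneg (x : ℝ) : 0 ≤ nint x := by
  rw [nint_eq_abs_sub_round]
  exact abs_nonneg _

lemma two_mul_nint_le_abs_sin (x : ℝ) : 2 * nint x ≤ |Real.sin (Real.pi * x)| := by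
  have hpi := Real.pi_pos
  have hshift : |Real.sin (Real.pi * x)| = |Real.sin (Real.pi * (x - round x))| := by
    rw [mul_sub, mul_comm Real.pi (round x : ℝ), Real.sin_sub_int_mul_pi, abs_mul,
      abs_neg_one_zpow, one_mul]
  have hsmall : |Real.pi * (x - round x)| ≤ Real.pi / 2 := by
    rw [abs_mul, abs_of_pos hpi]
    nlinarith [abs_sub_round x]
  have hsin := Real.mul_abs_le_abs_sin hsmall
  rw [abs_mul, abs_of_pos hpi, ← mul_assoc, div_mul_cancel₀ _ hpi.ne'] at hsin
  rwa [hshift, nint_eq_abs_sub_round]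

lemma norm_eee (x : ℝ) : ‖eee x‖ = 1 := by
  rw [eee, norm_exp]
  simp

lemma eee_add (x y : ℝ) : eee (x + y) = eee x * eee y := by
  rw [eee, eee, eee, ← exp_add]
  push_cast
  ring_nf

lemma eee_mul_intCast (θ : ℝ) (n : ℤ) : eee (θ * n) = eee θ ^ n := by
  rw [eee, eee, ← exp_int_mul]
  push_cast
  ring_nf

lemma four_mul_nint_le_norm_eee_sub_one (θ : ℝ) : 4 * nint θ ≤ ‖eee θ - 1‖ := by
  have h : eee θ = exp (I * ((2 * Real.pi * θ : ℝ) : ℂ)) := by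
    rw [eee]
    push_cast
    ring_nf
  rw [h, norm_exp_I_mul_ofReal_sub_one, norm_mul, Real.norm_eq_abs, Real.norm_eq_abs,
    abs_two, show 2 * Real.pi * θ / 2 = Real.pi * θ by ring]
  linarith [two_mul_nint_le_abs_sin θ]

lemma norm_sum_Icc_zpow_le {K : Type*} [NormedField K] {w : K} (hw : ‖w‖ = 1) (h1 : w ≠ 1)
    (a b : ℤ) : ‖∑ n ∈ Icc a b, w ^ n‖ ≤ 2 / ‖w - 1‖ := by
  have hw0 : w ≠ 0 := norm_ne_zero_iff.1 (by rw [hw]; exact one_ne_zero)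
  rw [Int.Icc_eq_finset_map, sum_map]
  simp only [Function.Embedding.trans_apply, Nat.castEmbedding_apply, addLeftEmbedding_apply,
    zpow_add₀ hw0, zpow_natCast, ← mul_sum, norm_mul, norm_zpow, hw, one_zpow, one_mul,
    geom_sum_eq h1, norm_div]
  gcongr
  calc ‖w ^ (b + 1 - a).toNat - 1‖ ≤ ‖w ^ (b + 1 - a).toNat‖ + ‖(1 : K)‖ := norm_sub_le _ _
    _ = 2 := by rw [norm_pow, hw, one_pow, norm_one]; norm_num

lemma Finset.eq_Icc_min'_max'_of_ordConnected {α : Type*} [LinearOrder α] [LocallyFiniteOrder α]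
    {S : Finset α} (hS : (S : Set α).OrdConnected) (hne : S.Nonempty) :
    S = Icc (S.min' hne) (S.max' hne) := by
  ext n
  refine ⟨fun hn => mem_Icc.2 ⟨S.min'_le n hn, S.le_max' n hn⟩, fun hn => ?_⟩
  exact hS.out (S.min'_mem hne) (S.max'_mem hne) (mem_Icc.1 hn)

lemma norm_sum_zpow_le_of_ordConnected {K : Type*} [NormedField K] {w : K} (hw : ‖w‖ = 1)
    (h1 : w ≠ 1) {S : Finset ℤ} (hS : (S : Set ℤ).OrdConnected) :
    ‖∑ n ∈ S, w ^ n‖ ≤ 2 / ‖w - 1‖ := by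
  rcases S.eq_empty_or_nonempty with rfl | hne
  · simp only [sum_empty, norm_zero]
    positivity
  · rw [S.eq_Icc_min'_max'_of_ordConnected hS hne]
    exact norm_sum_Icc_zpow_le hw h1 _ _

lemma norm_sum_eee_le_of_ordConnected {S : Finset ℤ} (hS : (S : Set ℤ).OrdConnected) {θ : ℝ}
    (hθ : nint θ ≠ 0) (c : ℝ) : ‖∑ n ∈ S, eee (θ * n + c)‖ ≤ (2 * nint θ)⁻¹ := by
  have hpos : 0 < nint θ := (nint_nonneg θ).lt_of_ne' hθ
  have hgap := four_mul_nint_le_norm_eee_sub_one θ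
  have h1 : eee θ ≠ 1 := by
    rintro h
    rw [h, sub_self, norm_zero] at hgap
    linarith
  calc ‖∑ n ∈ S, eee (θ * n + c)‖ = ‖(∑ n ∈ S, eee θ ^ n) * eee c‖ := by
        simp only [eee_add, eee_mul_intCast, sum_mul]
    _ = ‖∑ n ∈ S, eee θ ^ n‖ := by rw [norm_mul, norm_eee, mul_one]
    _ ≤ 2 / ‖eee θ - 1‖ := norm_sum_zpow_le_of_ordConnected (norm_eee θ) h1 hS
    _ ≤ 2 / (4 * nint θ) := by gcongr
    _ = (2 * nint θ)⁻¹ := by field_simp; ring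

lemma norm_sum_eee_le_of_ordConnected_halves {S : Finset ℤ}
    (hnonneg : (↑(S.filter (0 ≤ ·)) : Set ℤ).OrdConnected)
    (hneg : (↑(S.filter (· < 0)) : Set ℤ).OrdConnected) {θ : ℝ} (hθ : nint θ ≠ 0) (c : ℝ) :
    ‖∑ n ∈ S, eee (θ * n + c)‖ ≤ (nint θ)⁻¹ := by
  rw [← sum_filter_add_sum_filter_not S (0 ≤ ·)]
  simp only [not_le]
  calc _ ≤ (2 * nint θ)⁻¹ + (2 * nint θ)⁻¹ :=
        norm_add_le_of_le (norm_sum_eee_le_of_ordConnected hnonneg hθ c)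
          (norm_sum_eee_le_of_ordConnected hneg hθ c)
    _ = (nint θ)⁻¹ := by ring

lemma Set.OrdConnected.inter_preimage {α β : Type*} [Preorder α] [Preorder β] {s : Set α}
    {t : Set β} {g : α → β} (hs : s.OrdConnected) (ht : t.OrdConnected)
    (hg : MonotoneOn g s ∨ AntitoneOn g s) : (s ∩ g ⁻¹' t).OrdConnected := by
  obtain ⟨u, hu, heq⟩ := hg.elim ht.preimage_monotoneOn ht.preimage_antitoneOn
  rw [heq]
  exact hs.inter hu

lemma div_sqrt_sq_add_sq_le_of_nonneg {m s t : ℝ} (hm : 0 ≤ m) (hst : s ^ 2 ≤ t ^ 2) :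
    m / √(m ^ 2 + t ^ 2) ≤ m / √(m ^ 2 + s ^ 2) := by
  rcases hm.eq_or_lt with rfl | hm
  · simp
  · exact div_le_div_of_nonneg_left hm.le (by positivity) (Real.sqrt_le_sqrt (by linarith))

lemma div_sqrt_sq_add_sq_le_of_nonpos {m s t : ℝ} (hm : m ≤ 0) (hst : s ^ 2 ≤ t ^ 2) :
    m / √(m ^ 2 + s ^ 2) ≤ m / √(m ^ 2 + t ^ 2) := by
  have h := div_sqrt_sq_add_sq_le_of_nonneg (neg_nonneg.2 hm) hst
  rwa [neg_sq, neg_div, neg_div, neg_le_neg_iff] at h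

lemma arg_le_arg_of_im_nonneg {z w : ℂ} (hz : 0 ≤ z.im) (hw : 0 ≤ w.im) (hw0 : w ≠ 0)
    (h : w.re / ‖w‖ ≤ z.re / ‖z‖) : arg z ≤ arg w := by
  rcases eq_or_ne z 0 with rfl | hz0
  · simpa [arg_nonneg_iff] using hw
  · rw [arg_of_im_nonneg_of_ne_zero hz hz0, arg_of_im_nonneg_of_ne_zero hw hw0]
    exact Real.arccos_le_arccos h

lemma arg_le_arg_of_im_neg {z w : ℂ} (hz : z.im < 0) (hw : w.im < 0)
    (h : z.re / ‖z‖ ≤ w.re / ‖w‖) : arg z ≤ arg w := by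
  rw [arg_of_im_neg hz, arg_of_im_neg hw, neg_le_neg_iff]
  exact Real.arccos_le_arccos h

section VerticalLine

variable {m : ℝ}

lemma monotoneOn_arg_add_mul_I_Ici (hm : 0 ≤ m) :
    MonotoneOn (fun t : ℝ => arg (m + t * I)) (Set.Ici 0) := by
  intro s (hs : 0 ≤ s) t (ht : 0 ≤ t) hst
  rcases ht.eq_or_lt with rfl | ht
  · rw [le_antisymm hst hs]
  · refine arg_le_arg_of_im_nonneg (by simpa) (by simpa using ht.le)
      (ne_of_apply_ne im (by simpa using ht.ne')) ?_
    simpa [norm_add_mul_I] using div_sqrt_sq_add_sq_le_of_nonneg hm (pow_le_pow_left₀ hs hst 2)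

lemma antitoneOn_arg_add_mul_I_Ici (hm : m < 0) :
    AntitoneOn (fun t : ℝ => arg (m + t * I)) (Set.Ici 0) := by
  intro s (hs : 0 ≤ s) t (ht : 0 ≤ t) hst
  refine arg_le_arg_of_im_nonneg (by simpa) (by simpa)
    (ne_of_apply_ne re (by simpa using hm.ne)) ?_
  simpa [norm_add_mul_I] using div_sqrt_sq_add_sq_le_of_nonpos hm.le (pow_le_pow_left₀ hs hst 2)

lemma monotoneOn_arg_add_mul_I_Iio (hm : 0 ≤ m) :
    MonotoneOn (fun t : ℝ => arg (m + t * I)) (Set.Iio 0) := by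
  intro s (hs : s < 0) t (ht : t < 0) hst
  refine arg_le_arg_of_im_neg (by simpa) (by simpa) ?_
  simpa [norm_add_mul_I] using div_sqrt_sq_add_sq_le_of_nonneg hm (by nlinarith : t ^ 2 ≤ s ^ 2)

lemma antitoneOn_arg_add_mul_I_Iio (hm : m ≤ 0) :
    AntitoneOn (fun t : ℝ => arg (m + t * I)) (Set.Iio 0) := by
  intro s (hs : s < 0) t (ht : t < 0) hst
  refine arg_le_arg_of_im_neg (by simpa) (by simpa) ?_
  simpa [norm_add_mul_I] using div_sqrt_sq_add_sq_le_of_nonpos hm (by nlinarith : t ^ 2 ≤ s ^ 2)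

lemma ordConnected_setOf_sq_add_sq_le (y : ℝ) : {t : ℝ | m ^ 2 + t ^ 2 ≤ y}.OrdConnected := by
  refine ⟨fun a (ha : _ ≤ y) c (hc : _ ≤ y) b ⟨hab, hbc⟩ => ?_⟩
  show _ ≤ y
  rcases le_total 0 b with hb | hb <;> nlinarith

lemma ordConnected_sector_Ici (y f₁ f₂ : ℝ) :
    (Set.Ici 0 ∩ {t : ℝ | m ^ 2 + t ^ 2 ≤ y} ∩
      (fun t : ℝ => arg (m + t * I)) ⁻¹' Set.Ioc f₁ f₂).OrdConnected := by
  refine (Set.ordConnected_Ici.inter (ordConnected_setOf_sq_add_sq_le y)).inter_preimage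
    Set.ordConnected_Ioc ?_
  rcases le_or_gt 0 m with hm | hm
  · exact .inl ((monotoneOn_arg_add_mul_I_Ici hm).mono Set.inter_subset_left)
  · exact .inr ((antitoneOn_arg_add_mul_I_Ici hm).mono Set.inter_subset_left)

lemma ordConnected_sector_Iio (y f₁ f₂ : ℝ) :
    (Set.Iio 0 ∩ {t : ℝ | m ^ 2 + t ^ 2 ≤ y} ∩
      (fun t : ℝ => arg (m + t * I)) ⁻¹' Set.Ioc f₁ f₂).OrdConnected := by
  refine (Set.ordConnected_Iio.inter (ordConnected_setOf_sq_add_sq_le y)).inter_preimage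
    Set.ordConnected_Ioc ?_
  rcases le_total 0 m with hm | hm
  · exact .inl ((monotoneOn_arg_add_mul_I_Iio hm).mono Set.inter_subset_left)
  · exact .inr ((antitoneOn_arg_add_mul_I_Iio hm).mono Set.inter_subset_left)

end VerticalLine

noncomputable def sectorFiber (N m : ℤ) (y f₁ f₂ : ℝ) : Finset ℤ :=
  (Icc (-N) N).filter fun n =>
    (m : ℝ) ^ 2 + (n : ℝ) ^ 2 ≤ y ∧ f₁ < arg (m + n * I) ∧ arg (m + n * I) ≤ f₂

lemma coe_sectorFiber_filter (N m : ℤ) (y f₁ f₂ : ℝ) (H : Set ℝ) (p : ℤ → Prop) [DecidablePred p]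
    (hp : ∀ n : ℤ, p n ↔ (n : ℝ) ∈ H) :
    (↑((sectorFiber N m y f₁ f₂).filter p) : Set ℤ) = Set.Icc (-N) N ∩ Int.cast ⁻¹'
      (H ∩ {t : ℝ | (m : ℝ) ^ 2 + t ^ 2 ≤ y} ∩
        (fun t : ℝ => arg ((m : ℝ) + t * I)) ⁻¹' Set.Ioc f₁ f₂) := by
  ext n
  simp only [hp, sectorFiber, coe_filter, mem_filter, mem_Icc, Set.mem_ofPred_eq, ofReal_intCast,
    Set.preimage_inter, Set.preimage_ofPred_eq, Set.mem_inter_iff, Set.mem_Icc, Set.mem_preimage,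
    Set.mem_Ioc]
  tauto

lemma ordConnected_sectorFiber_nonneg (N m : ℤ) (y f₁ f₂ : ℝ) :
    (↑((sectorFiber N m y f₁ f₂).filter (0 ≤ ·)) : Set ℤ).OrdConnected := by
  rw [coe_sectorFiber_filter N m y f₁ f₂ (Set.Ici 0) _ fun n => by simp]
  exact Set.ordConnected_Icc.inter ((ordConnected_sector_Ici y f₁ f₂).preimage_mono Int.cast_mono)

lemma ordConnected_sectorFiber_neg (N m : ℤ) (y f₁ f₂ : ℝ) :
    (↑((sectorFiber N m y f₁ f₂).filter (· < 0)) : Set ℤ).OrdConnected := by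
  rw [coe_sectorFiber_filter N m y f₁ f₂ (Set.Iio 0) _ fun n => by simp]
  exact Set.ordConnected_Icc.inter ((ordConnected_sector_Iio y f₁ f₂).preimage_mono Int.cast_mono)

lemma card_Icc_neg_ceil_sqrt_le {y : ℝ} (hy : 1 ≤ y) :
    (#(Icc (-⌈√y⌉) ⌈√y⌉) : ℝ) ≤ 5 * √y := by
  have hsqrt : 1 ≤ √y := Real.one_le_sqrt.2 hy
  have hceil : (⌈√y⌉ : ℝ) < √y + 1 := Int.ceil_lt_add_one _
  have hN : 0 ≤ ⌈√y⌉ := Int.ceil_nonneg (Real.sqrt_nonneg y)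
  rw [Int.card_Icc, ← Int.cast_natCast, Int.toNat_of_nonneg (by omega)]
  push_cast
  linarith

lemma le_mul_mmin {c X t Y : ℝ} (hc : 1 ≤ c) (ht : 0 ≤ t) (hY : X ≤ c * Y)
    (hinv : t ≠ 0 → X ≤ t⁻¹) : X ≤ c * mmin t Y := by
  unfold mmin
  split_ifs with h
  · exact hY
  · rw [mul_min_of_nonneg _ _ (by linarith)]
    exact le_min ((hinv h).trans (le_mul_of_one_le_left (inv_nonneg.2 ht) hc)) hY

open Classical in
/-- The sum of `e(Re(κ)m₂ + Im(κ)m₁)` over lattice points `(m₁, m₂)` in the disk of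
radius `√y` lying in the sector `f₁ < arg ≤ f₂` is
`O(y^{1/2} · min{‖Re(κ)‖⁻¹, √y})`. -/
theorem sector_exponential_sum_bound :
    ∃ C : ℝ, 0 < C ∧ ∀ κ : ℂ, ∀ y : ℝ, 1 ≤ y → ∀ f₁ f₂ : ℝ, f₁ < f₂ →
      ‖∑ p ∈ ((Finset.Icc (-⌈Real.sqrt y⌉) ⌈Real.sqrt y⌉) ×ˢ
          (Finset.Icc (-⌈Real.sqrt y⌉) ⌈Real.sqrt y⌉)).filter
            (fun p : ℤ × ℤ => (p.1 : ℝ) ^ 2 + (p.2 : ℝ) ^ 2 ≤ y ∧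
              f₁ < Complex.arg ((p.1 : ℂ) + (p.2 : ℂ) * Complex.I) ∧
              Complex.arg ((p.1 : ℂ) + (p.2 : ℂ) * Complex.I) ≤ f₂),
          eee (κ.re * (p.2 : ℝ) + κ.im * (p.1 : ℝ))‖ ≤
        C * Real.sqrt y * mmin (nint κ.re) (Real.sqrt y) := by
  refine ⟨25, by norm_num, fun κ y hy f₁ f₂ _ => ?_⟩
  set N := ⌈√y⌉
  have hcard := card_Icc_neg_ceil_sqrt_le hy
  have hfiber : ∀ m : ℤ, ‖∑ n ∈ sectorFiber N m y f₁ f₂, eee (κ.re * n + κ.im * m)‖ ≤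
      5 * mmin (nint κ.re) (√y) := by
    intro m
    refine le_mul_mmin (by norm_num) (nint_nonneg _) ?_ fun hθ =>
      norm_sum_eee_le_of_ordConnected_halves (ordConnected_sectorFiber_nonneg N m y f₁ f₂)
        (ordConnected_sectorFiber_neg N m y f₁ f₂) hθ _
    calc _ ≤ ∑ n ∈ sectorFiber N m y f₁ f₂, (1 : ℝ) :=
          norm_sum_le_of_le _ fun n _ => (norm_eee _).le
      _ = #(sectorFiber N m y f₁ f₂) := by simp
      _ ≤ #(Icc (-N) N) := by exact_mod_cast card_filter_le _ _
      _ ≤ 5 * √y := hcard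
  rw [sum_filter, sum_product]
  simp only [← sum_filter]
  show ‖∑ m ∈ Icc (-N) N, ∑ n ∈ sectorFiber N m y f₁ f₂, eee (κ.re * n + κ.im * m)‖ ≤ _
  calc _ ≤ ∑ m ∈ Icc (-N) N, 5 * mmin (nint κ.re) (√y) := norm_sum_le_of_le _ fun m _ => hfiber m
    _ = #(Icc (-N) N) * (5 * mmin (nint κ.re) (√y)) := by rw [sum_const, nsmul_eq_mul]
    _ ≤ 5 * √y * (5 * mmin (nint κ.re) (√y)) := by
        gcongr
        exact (norm_nonneg _).trans (hfiber 0)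
    _ = 25 * √y * mmin (nint κ.re) (√y) := by ring
end

section
/- Let p be a nonzero complex number, let c be a nonzero complex number with |c| ≤ 1, let η > 0, and let r, q be complex numbers with q ∈ B_{η|c|}(rc), i.e. |q − rc| ≤ η|c|. Then the Lebesgue area of the intersection B_{η/|p|}(r/p) ∩ B_{η/(|c||p|)}(q/(cp)) is at least (π/3 − √3/2)·(η/|p|)², where B_Δ(a) denotes the closed disk of radius Δ centered at a. -/
open Complex MeasureTheory Metric

/-! The centers are at distance at most `R = η / ‖p‖` and the second radius is at least `R`, so
both disks contain the disk of radius `R / 2` about the midpoint of the centers, whose area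
`π R² / 4` already exceeds `(π/3 - √3/2) R²`. -/

theorem closedBall_midpoint_subset_inter {E : Type*} [NormedAddCommGroup E] [NormedSpace ℝ E]
    {x y : E} {R R' : ℝ} (hxy : dist x y ≤ R) (hR : R ≤ R') :
    closedBall (midpoint ℝ x y) (R / 2) ⊆ closedBall x R ∩ closedBall y R' := by
  have hx : dist (midpoint ℝ x y) x ≤ R / 2 := by
    rw [dist_midpoint_left, Real.norm_two]; linarith
  have hy : dist (midpoint ℝ x y) y ≤ R / 2 := by
    rw [dist_midpoint_right, Real.norm_two]; linarith
  intro z hz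
  rw [mem_closedBall] at hz
  exact ⟨mem_closedBall.2 <| (dist_triangle z _ x).trans (by linarith),
    mem_closedBall.2 <| (dist_triangle z _ y).trans (by linarith)⟩

theorem pi_mul_sq_div_four_le_volume_real_closedBall_inter {x y : ℂ} {R R' : ℝ}
    (hxy : dist x y ≤ R) (hR : R ≤ R') :
    Real.pi * R ^ 2 / 4 ≤ volume.real (closedBall x R ∩ closedBall y R') := by
  have hR₀ : 0 ≤ R := dist_nonneg.trans hxy
  calc Real.pi * R ^ 2 / 4 = volume.real (closedBall (midpoint ℝ x y) (R / 2)) := by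
        rw [measureReal_def, Complex.volume_closedBall, ENNReal.toReal_mul, ENNReal.toReal_pow,
          ENNReal.toReal_ofReal (by positivity)]
        simp only [ENNReal.coe_toReal, NNReal.coe_real_pi]; ring
    _ ≤ volume.real (closedBall x R ∩ closedBall y R') :=
        measureReal_mono (closedBall_midpoint_subset_inter hxy hR)
          ((measure_mono Set.inter_subset_left).trans_lt measure_closedBall_lt_top).ne

theorem pi_div_three_sub_sqrt_three_div_two_le_pi_div_four :
    Real.pi / 3 - Real.sqrt 3 / 2 ≤ Real.pi / 4 := by
  have : 1 ≤ Real.sqrt 3 := Real.one_le_sqrt.2 (by norm_num)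
  linarith [Real.pi_le_four]

theorem dist_div_div_mul_le {p c r q : ℂ} {η : ℝ} (hc : c ≠ 0)
    (hq : ‖q - r * c‖ ≤ η * ‖c‖) :
    dist (r / p) (q / (c * p)) ≤ η / ‖p‖ := by
  have hc' : 0 < ‖c‖ := norm_pos_iff.2 hc
  calc dist (r / p) (q / (c * p)) = ‖q - r * c‖ / (‖c‖ * ‖p‖) := by
        rw [dist_comm, dist_eq_norm, ← norm_mul, ← norm_div]
        congr 1; field_simp
    _ ≤ η * ‖c‖ / (‖c‖ * ‖p‖) := by gcongr
    _ = η / ‖p‖ := by rw [mul_comm η, mul_div_mul_left _ _ hc'.ne']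

theorem lens_area_lower_bound_general (p c : ℂ) (hc : c ≠ 0)
    (hc1 : ‖c‖ ≤ 1) (η : ℝ) (r q : ℂ)
    (hq : ‖q - r * c‖ ≤ η * ‖c‖) :
    (Real.pi / 3 - Real.sqrt 3 / 2) * (η / ‖p‖) ^ 2 ≤
      (volume (closedBall (r / p) (η / ‖p‖) ∩
        closedBall (q / (c * p)) (η / (‖c‖ * ‖p‖)))).toReal := by
  have hcenters := dist_div_div_mul_le (p := p) hc hq
  have hradii : η / ‖p‖ ≤ η / (‖c‖ * ‖p‖) := by
    rw [mul_comm, ← div_div]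
    exact le_div_self (dist_nonneg.trans hcenters) (norm_pos_iff.2 hc) hc1
  calc (Real.pi / 3 - Real.sqrt 3 / 2) * (η / ‖p‖) ^ 2
      ≤ Real.pi / 4 * (η / ‖p‖) ^ 2 := by
        gcongr; exact pi_div_three_sub_sqrt_three_div_two_le_pi_div_four
    _ = Real.pi * (η / ‖p‖) ^ 2 / 4 := by ring
    _ ≤ _ := pi_mul_sq_div_four_le_volume_real_closedBall_inter hcenters hradii

/-- Lens area lower bound: if `|q - rc| ≤ η|c|`, `p ≠ 0`, `0 < |c| ≤ 1`, then the
intersection of the disks `B_{η/|p|}(r/p)` and `B_{η/(|c||p|)}(q/(cp))` has Lebesgue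
area at least `(π/3 - √3/2)(η/|p|)²`. -/
theorem lens_area_lower_bound (p c : ℂ) (hp : p ≠ 0) (hc : c ≠ 0)
    (hc1 : ‖c‖ ≤ 1) (η : ℝ) (hη : 0 < η) (r q : ℂ)
    (hq : ‖q - r * c‖ ≤ η * ‖c‖) :
    (Real.pi / 3 - Real.sqrt 3 / 2) * (η / ‖p‖) ^ 2 ≤
      (volume (closedBall (r / p) (η / ‖p‖) ∩
        closedBall (q / (c * p)) (η / (‖c‖ * ‖p‖)))).toReal :=
  lens_area_lower_bound_general p c hc hc1 η r q hq
end
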